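/- Let S = {e, x₁, ..., x_n} (n ≥ 3) with operation x_i ∘ x_j = x_i for i ≠ j, x_i ∘ x_i = e, and e as identity. Then every right inner mapping f(x_i, x_j) is an automorphism of the right loop (S, ∘), and Aut(S, ∘) = Sym(S \ {e}). -/
import Mathlib


/-- The operation on `S = {e, x₁, …, x_n}` (encoded as `Fin (n+1)` with `e = 0`):
`e` is a two-sided identity, `x_i ∘ x_j = x_i` for `i ≠ j`, and `x_i ∘ x_i = e`. -/
def exOp (n : ℕ) (i j : Fin (n + 1)) : Fin (n + 1) :=
  if i = 0 then j else if j = 0 then i else if i = j then 0 else i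

lemma exOp_self (n : ℕ) (a : Fin (n + 1)) : exOp n a a = 0 := by
  unfold exOp; split_ifs <;> simp_all

lemma exOp_invol (n : ℕ) (a c : Fin (n + 1)) : exOp n (exOp n a c) c = a := by
  unfold exOp
  split_ifs <;> simp_all

lemma exOp_right_inj (n : ℕ) (c : Fin (n + 1)) :
    Function.Injective (fun a => exOp n a c) := by
  intro a b h
  have := congrArg (fun z => exOp n z c) h
  simpa [exOp_invol] using this

lemma aut_of_fix (n : ℕ) (π : Fin (n + 1) → Fin (n + 1))
    (hinj : Function.Injective π) (h0 : π 0 = 0) :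
    ∀ x y, π (exOp n x y) = exOp n (π x) (π y) := by
  intro x y
  have h1 : ∀ a : Fin (n + 1), (π a = 0) = (a = 0) := fun a =>
    propext ⟨fun h => hinj (h.trans h0.symm), fun h => h ▸ h0⟩
  have h2 : (π x = π y) = (x = y) := propext hinj.eq_iff
  simp only [exOp, h1, h2]
  split_ifs <;> simp [h0]

/-- For `n ≥ 3`: every right inner mapping `f(x_i, x_j)` (any map satisfying
`F(w) ∘ (x_i∘x_j) = (w∘x_i)∘x_j` for some `i, j`) is an automorphism of the right
loop `(S, ∘)`, and `Aut(S, ∘) = Sym(S \ {e})` (the permutations of `S` fixing `e`). -/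
theorem exInnerMappings_aut (n : ℕ) (hn : 3 ≤ n) :
    (∀ F : Fin (n + 1) → Fin (n + 1),
      (∃ i j, ∀ w, exOp n (F w) (exOp n i j) = exOp n (exOp n w i) j) →
        Function.Bijective F ∧ ∀ x y, F (exOp n x y) = exOp n (F x) (F y)) ∧
    {π : Equiv.Perm (Fin (n + 1)) | ∀ x y, π (exOp n x y) = exOp n (π x) (π y)} =
      {π : Equiv.Perm (Fin (n + 1)) | π 0 = 0} := by
  constructor
  · intro F ⟨i, j, H⟩
    have hF : ∀ w, F w = exOp n (exOp n (exOp n w i) j) (exOp n i j) := by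
      intro w
      rw [← H w, exOp_invol]
    have hinj : Function.Injective F := by
      intro a b h
      rw [hF a, hF b] at h
      exact (exOp_right_inj n i)
        ((exOp_right_inj n j) ((exOp_right_inj n (exOp n i j)) h))
    have h0 : F 0 = 0 := by
      rw [hF 0]
      simp only [exOp]
      split_ifs <;> simp_all [exOp_self]
    exact ⟨⟨hinj, Finite.surjective_of_injective hinj⟩, aut_of_fix n F hinj h0⟩
  · ext π
    simp only [Set.mem_setOf_eq]
    constructor
    · intro h
      have := h 0 0
      simp [exOp_self] at this
      exact this
    · intro h0
      exact aut_of_fix n π π.injective h0
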